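/- arXiv:2110.07712 — 3 statements merged into one kernel-verified Lean document; each statement's English description precedes it below -/
import Mathlib

section
/- Let H be a transitive permutation group on a finite set B of size d, and let G = C₂ ≀ H act on {1,2} × B. If G' ≤ G is a subgroup that contains at least one transposition of {1,2} × B and whose image under the projection G → H is all of H, then G' = G. -/
/-! A transposition of `ZMod 2 × B` lying in `C₂ ≀ H` moves a single block, so it is the base
element `e_b` swapping the two points over some `b`. Conjugating it by lifts of elements of the
transitive group `H` gives every `e_b`; these generate the base group `C₂^B`, and multiplying the
lift of `s ∈ H` by base elements reaches every `x ⋊ s`. -/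

private lemma zmod2_add_self (a : ZMod 2) : a + a = 0 := by
  fin_cases a <;> decide

/-- The element `x ⋊ s` of the wreath product `C₂ ≀ H`, realized as a permutation of
`ZMod 2 × B` (the set `{1,2} × B`): blocks are permuted by `s` and then the two points of the
block over `b` are swapped iff the coordinate `x b` is nonzero. -/
def wreathPerm {B : Type} (x : B → ZMod 2) (s : Equiv.Perm B) : Equiv.Perm (ZMod 2 × B) where
  toFun p := (p.1 + x (s p.2), s p.2)
  invFun p := (p.1 + x p.2, s.symm p.2)
  left_inv p := by
    obtain ⟨i, b⟩ := p
    simp [add_assoc, zmod2_add_self]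
  right_inv p := by
    obtain ⟨i, b⟩ := p
    simp [add_assoc, zmod2_add_self]

lemma wreathPerm_apply {B : Type} (x : B → ZMod 2) (s : Equiv.Perm B) (p : ZMod 2 × B) :
    wreathPerm x s p = (p.1 + x (s p.2), s p.2) := rfl

lemma wreathPerm_one {B : Type} : wreathPerm (fun _ : B => (0 : ZMod 2)) 1 = 1 := by
  apply Equiv.ext
  intro p
  simp [wreathPerm_apply]

lemma wreathPerm_mul {B : Type} (x y : B → ZMod 2) (s t : Equiv.Perm B) :
    wreathPerm x s * wreathPerm y t
      = wreathPerm (fun c => x c + y (s⁻¹ c)) (s * t) := by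
  apply Equiv.ext
  intro p
  simp [wreathPerm_apply, Equiv.Perm.mul_apply]
  ring

lemma wreathPerm_inv {B : Type} (x : B → ZMod 2) (s : Equiv.Perm B) :
    (wreathPerm x s)⁻¹ = wreathPerm (fun c => x (s c)) s⁻¹ := by
  apply inv_eq_of_mul_eq_one_right
  rw [wreathPerm_mul]
  have h1 : (fun c => x c + x (s (s⁻¹ c))) = fun _ : B => (0 : ZMod 2) := by
    funext c
    simp [zmod2_add_self]
  rw [h1]
  rw [mul_inv_cancel]
  exact wreathPerm_one

section WreathProduct

variable {B : Type}

lemma wreathPerm_apply_eq_self_iff (x : B → ZMod 2) (s : Equiv.Perm B) (i : ZMod 2) (b : B) :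
    wreathPerm x s (i, b) = (i, b) ↔ s b = b ∧ x b = 0 := by
  simp only [wreathPerm_apply, Prod.mk.injEq, add_eq_left]
  constructor
  · rintro ⟨hx, hb⟩
    exact ⟨hb, hb ▸ hx⟩
  · rintro ⟨hb, hx⟩
    exact ⟨hb.symm ▸ hx, hb⟩

lemma wreathPerm_base_mul (x y : B → ZMod 2) :
    wreathPerm (x + y) 1 = wreathPerm x 1 * wreathPerm y 1 := by
  rw [wreathPerm_mul]
  rfl

lemma wreathPerm_conj_base (y z : B → ZMod 2) (s : Equiv.Perm B) :
    wreathPerm y s * wreathPerm z 1 * (wreathPerm y s)⁻¹ = wreathPerm (fun c => z (s⁻¹ c)) 1 := by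
  rw [wreathPerm_inv, wreathPerm_mul, wreathPerm_mul, mul_one, mul_inv_cancel]
  congr 1
  funext c
  simp only [Equiv.Perm.coe_inv, Equiv.apply_symm_apply]
  rw [add_right_comm, zmod2_add_self, zero_add]

lemma wreathPerm_eq_base_mul (x y : B → ZMod 2) (s : Equiv.Perm B) :
    wreathPerm x s = wreathPerm (x + y) 1 * wreathPerm y s := by
  rw [wreathPerm_mul, one_mul]
  congr 1
  funext c
  simp [add_assoc, zmod2_add_self]

/-- Every point of the block over `b` is moved as soon as one of them is, so a transposition moves
exactly one block, the two points of which it swaps. -/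
lemma eq_wreathPerm_single_of_isSwap [DecidableEq B] {x : B → ZMod 2} {s : Equiv.Perm B}
    (h : (wreathPerm x s).IsSwap) : ∃ b, s = 1 ∧ x = Pi.single b 1 := by
  obtain ⟨p, q, hpq, hswap⟩ := h
  have moved_eq : ∀ b, ¬(s b = b ∧ x b = 0) → b = p.2 := by
    intro b hb
    have mem_pq : ∀ i : ZMod 2, (i, b) = p ∨ (i, b) = q := by
      intro i
      by_contra! hne
      rw [← wreathPerm_apply_eq_self_iff x s i, hswap] at hb
      exact hb (Equiv.swap_apply_of_ne_of_ne hne.1 hne.2)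
    rcases mem_pq 0 with h0 | h0
    · exact congrArg Prod.snd h0
    · rcases mem_pq 1 with h1 | h1
      · exact congrArg Prod.snd h1
      · exact absurd (congrArg Prod.fst (h0.trans h1.symm)) zero_ne_one
  have p_moved : ¬(s p.2 = p.2 ∧ x p.2 = 0) := by
    rw [← wreathPerm_apply_eq_self_iff x s p.1, hswap]
    simpa using hpq.symm
  have hs : s = 1 := by
    ext b
    by_contra hb
    have hsb : s (s b) ≠ s b := fun h => hb (s.injective h)
    exact hb ((moved_eq (s b) (fun h => hsb h.1)).trans (moved_eq b (fun h => hb h.1)).symm)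
  refine ⟨p.2, hs, funext fun b => ?_⟩
  subst hs
  by_cases hb : b = p.2
  · subst hb
    simp only [Equiv.Perm.one_apply, true_and] at p_moved
    rw [Pi.single_eq_same]
    exact (by decide : ∀ a : ZMod 2, a ≠ 0 → a = 1) _ p_moved
  · rw [Pi.single_eq_of_ne hb]
    by_contra hx
    exact hb (moved_eq b fun h => hx h.2)

end WreathProduct

section Subgroup

variable {B : Type} [DecidableEq B] {G' : Subgroup (Equiv.Perm (ZMod 2 × B))}

lemma wreathPerm_base_mem_of_forall_single_mem [Fintype B]
    (h : ∀ b, wreathPerm (Pi.single b 1) 1 ∈ G') (x : B → ZMod 2) : wreathPerm x 1 ∈ G' := by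
  rw [← Finset.univ_sum_single x]
  refine Finset.sum_induction _ (fun z => wreathPerm z 1 ∈ G')
    (fun y z hy hz => wreathPerm_base_mul y z ▸ G'.mul_mem hy hz)
    (wreathPerm_one ▸ G'.one_mem) (fun b _ => ?_)
  rcases (by decide : ∀ a : ZMod 2, a = 0 ∨ a = 1) (x b) with hx | hx
  · rw [hx, Pi.single_zero]
    exact wreathPerm_one ▸ G'.one_mem
  · exact hx ▸ h b

lemma wreathPerm_single_mem_of_isPretransitive {H : Subgroup (Equiv.Perm B)}
    (htrans : ∀ a b : B, ∃ s ∈ H, s a = b) (hproj : ∀ s ∈ H, ∃ x : B → ZMod 2, wreathPerm x s ∈ G')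
    {b₀ : B} (hb₀ : wreathPerm (Pi.single b₀ 1) 1 ∈ G') (b : B) :
    wreathPerm (Pi.single b 1) 1 ∈ G' := by
  obtain ⟨s, hs, rfl⟩ := htrans b₀ b
  obtain ⟨y, hy⟩ := hproj s hs
  have hsingle : (fun c => (Pi.single b₀ 1 : B → ZMod 2) (s⁻¹ c)) = Pi.single (s b₀) 1 := by
    funext c
    simp only [Pi.single_apply, Equiv.Perm.inv_eq_iff_eq]
  rw [← hsingle, ← wreathPerm_conj_base]
  exact G'.mul_mem (G'.mul_mem hy hb₀) (G'.inv_mem hy)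

end Subgroup

/-- If `G' ≤ G = C₂ ≀ H` contains a transposition and surjects onto the transitive group `H`,
then `G' = G`. -/
theorem subgroup_of_wreath_with_transposition_and_full_projection_eq
    {B : Type} [Fintype B] [DecidableEq B]
    (H : Subgroup (Equiv.Perm B))
    (htrans : ∀ a b : B, ∃ s ∈ H, s a = b)
    (G' : Subgroup (Equiv.Perm (ZMod 2 × B)))
    (hsub : ∀ g ∈ G', ∃ (x : B → ZMod 2) (s : Equiv.Perm B), s ∈ H ∧ g = wreathPerm x s)
    (hswap : ∃ g ∈ G', Equiv.Perm.IsSwap g)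
    (hproj : ∀ s ∈ H, ∃ x : B → ZMod 2, wreathPerm x s ∈ G') :
    ∀ (x : B → ZMod 2) (s : Equiv.Perm B), s ∈ H → wreathPerm x s ∈ G' := by
  obtain ⟨g, hg, hg_swap⟩ := hswap
  obtain ⟨x₀, s₀, -, rfl⟩ := hsub g hg
  obtain ⟨b₀, rfl, rfl⟩ := eq_wreathPerm_single_of_isSwap hg_swap
  have hbase : ∀ z, wreathPerm z 1 ∈ G' := wreathPerm_base_mem_of_forall_single_mem
    (wreathPerm_single_mem_of_isPretransitive htrans hproj hg)
  intro x s hs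
  obtain ⟨y, hy⟩ := hproj s hs
  rw [wreathPerm_eq_base_mul x y]
  exact G'.mul_mem (hbase _) hy
end

section
/- Let H be a transitive permutation group on a finite set B with a distinguished point 1 ∈ B, let G = C₂ ≀ H = C₂^B ⋊ H, and let Stab_G be the stabilizer in G of the point (1,1) ∈ {1,2} × B, so Stab_G = C₂^{B∖{1}} ⋊ Stab_H(1). If M is a subgroup of G properly containing Stab_G, then M contains the subgroup C₂^B ⋊ Stab_H(1). -/
/-! Modulo the stabiliser, every element of `C₂^B ⋊ Stab_H(b₁)` is a power of the swap
`wreathPerm (Pi.single b₁ 1) 1` of the two points over `b₁`, so it suffices to show that `M`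
contains this swap. An element `g = x ⋊ s ∈ M` moving `(0, b₁)` either fixes the block
of `b₁`, and then `g` is the swap times an element of the stabiliser, or it moves that block, and
then conjugating the swap over `s b₁` (which lies in the stabiliser) by `g` gives the swap over
`b₁`. -/

lemma wreathPerm_one_mul {B : Type} (x y : B → ZMod 2) (s : Equiv.Perm B) :
    wreathPerm x 1 * wreathPerm y s = wreathPerm (x + y) s := by
  rw [wreathPerm_mul, one_mul]
  rfl

lemma wreathPerm_inv_mul_base_mul {B : Type} (x z : B → ZMod 2) (s : Equiv.Perm B) :
    (wreathPerm x s)⁻¹ * wreathPerm z 1 * wreathPerm x s = wreathPerm (z ∘ s) 1 := by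
  rw [wreathPerm_inv, wreathPerm_mul, wreathPerm_mul, mul_one, inv_mul_cancel]
  congr 1
  funext c
  simp only [inv_inv, Function.comp_apply]
  rw [add_right_comm, zmod2_add_self, zero_add]

lemma single_add_update_zero {B : Type} [DecidableEq B] (x : B → ZMod 2) (b : B) :
    Pi.single b (x b) + Function.update x b 0 = x := by
  funext c
  by_cases hc : c = b
  · subst hc
    simp
  · simp [hc]

section OvergroupOfStabilizer

variable {B : Type} [DecidableEq B] {H : Subgroup (Equiv.Perm B)} {b₁ : B}
  {M : Subgroup (Equiv.Perm (ZMod 2 × B))}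
  (hstab : ∀ (x : B → ZMod 2) (s : Equiv.Perm B),
    s ∈ H → s b₁ = b₁ → x b₁ = 0 → wreathPerm x s ∈ M)
include hstab

lemma wreathPerm_mem_iff_single_mem {x : B → ZMod 2} {s : Equiv.Perm B} (hs : s ∈ H)
    (hsb : s b₁ = b₁) :
    wreathPerm x s ∈ M ↔ wreathPerm (Pi.single b₁ (x b₁)) 1 ∈ M := by
  have hy := hstab (Function.update x b₁ 0) s hs hsb (Function.update_self ..)
  conv_rhs => rw [← M.mul_mem_cancel_right hy, wreathPerm_one_mul, single_add_update_zero]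

lemma wreathPerm_single_mem_of_moves {x : B → ZMod 2} {s : Equiv.Perm B} (hs : s ∈ H)
    (hg : wreathPerm x s ∈ M) (hmove : wreathPerm x s (0, b₁) ≠ (0, b₁)) :
    wreathPerm (Pi.single b₁ 1) 1 ∈ M := by
  by_cases hsb : s b₁ = b₁
  · have hx : x b₁ = 1 :=
      Fin.eq_one_of_ne_zero _ fun h0 => hmove (by rw [wreathPerm_apply, hsb, h0]; rfl)
    rwa [← hx, ← wreathPerm_mem_iff_single_mem hstab hs hsb]
  · have hsingle : (Pi.single (s b₁) 1 : B → ZMod 2) ∘ s = Pi.single b₁ 1 :=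
      by simpa using Pi.single_comp_equiv s (s b₁) 1
    have hz : wreathPerm (Pi.single (s b₁) 1) 1 ∈ M :=
      hstab _ 1 H.one_mem rfl (Pi.single_eq_of_ne' hsb _)
    rw [← hsingle, ← wreathPerm_inv_mul_base_mul x]
    exact M.mul_mem (M.mul_mem (M.inv_mem hg) hz) hg

end OvergroupOfStabilizer

theorem overgroup_of_point_stabilizer_in_wreath_general
    {B : Type}
    (H : Subgroup (Equiv.Perm B))
    (b₁ : B)
    (M : Subgroup (Equiv.Perm (ZMod 2 × B)))
    (hsub : ∀ g ∈ M, ∃ (x : B → ZMod 2) (s : Equiv.Perm B), s ∈ H ∧ g = wreathPerm x s)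
    (hstab : ∀ (x : B → ZMod 2) (s : Equiv.Perm B),
      s ∈ H → s b₁ = b₁ → x b₁ = 0 → wreathPerm x s ∈ M)
    (hproper : ∃ g ∈ M, g (0, b₁) ≠ (0, b₁)) :
    ∀ (x : B → ZMod 2) (s : Equiv.Perm B), s ∈ H → s b₁ = b₁ → wreathPerm x s ∈ M := by
  classical
  obtain ⟨g, hgM, hmove⟩ := hproper
  obtain ⟨y, t, ht, rfl⟩ := hsub g hgM
  have hswap := wreathPerm_single_mem_of_moves hstab ht hgM hmove
  intro x s hs hsb
  rw [wreathPerm_mem_iff_single_mem hstab hs hsb]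
  by_cases h : x b₁ = 0
  · rw [h, Pi.single_zero]
    exact hstab 0 1 H.one_mem rfl rfl
  · rwa [Fin.eq_one_of_ne_zero _ h]

/-- If a subgroup `M` of `G = C₂ ≀ H` properly contains the stabilizer
`Stab_G((1,1)) = C₂^{B∖{b₁}} ⋊ Stab_H(b₁)` of the point `(1, b₁)`, then `M` contains
`C₂^B ⋊ Stab_H(b₁)`. -/
theorem overgroup_of_point_stabilizer_in_wreath
    {B : Type} [Fintype B] [DecidableEq B]
    (H : Subgroup (Equiv.Perm B))
    (htrans : ∀ a b : B, ∃ s ∈ H, s a = b)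
    (b₁ : B)
    (M : Subgroup (Equiv.Perm (ZMod 2 × B)))
    (hsub : ∀ g ∈ M, ∃ (x : B → ZMod 2) (s : Equiv.Perm B), s ∈ H ∧ g = wreathPerm x s)
    (hstab : ∀ (x : B → ZMod 2) (s : Equiv.Perm B),
      s ∈ H → s b₁ = b₁ → x b₁ = 0 → wreathPerm x s ∈ M)
    (hproper : ∃ g ∈ M, g (0, b₁) ≠ (0, b₁)) :
    ∀ (x : B → ZMod 2) (s : Equiv.Perm B), s ∈ H → s b₁ = b₁ → wreathPerm x s ∈ M :=
  overgroup_of_point_stabilizer_in_wreath_general H b₁ M hsub hstab hproper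
end

section
/- Let H be a transitive permutation group of degree d with a point stabilizer Stab_H(1), let G = C₂ ≀ H = C₂^d ⋊ H, let S_F = C₂^d ⋊ Stab_H(1) and S_K = (0 × C₂^{d−1}) ⋊ Stab_H(1) ≤ S_F (where 0 × C₂^{d−1} denotes base elements with trivial first coordinate). Then S_K has index 2 in S_F, and the induction Ind_{S_F}^{G}(U) of the sign character U of S_F/S_K (a one-dimensional F₃-representation of S_F) is an irreducible F₃[G]-representation of dimension d. -/
/-- The subgroup `S_F = C₂^B ⋊ Stab_H(b₀)` of `C₂ ≀ H`. -/
def wreathSF {B : Type} (H : Subgroup (Equiv.Perm B)) (b₀ : B) :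
    Subgroup (Equiv.Perm (ZMod 2 × B)) where
  carrier := {g | ∃ (x : B → ZMod 2) (s : Equiv.Perm B),
    s ∈ H ∧ s b₀ = b₀ ∧ g = wreathPerm x s}
  one_mem' := ⟨fun _ => 0, 1, H.one_mem, rfl, wreathPerm_one.symm⟩
  mul_mem' := by
    rintro a b ⟨x, s, hs, hsb, rfl⟩ ⟨y, t, ht, htb, rfl⟩
    exact ⟨fun c => x c + y (s⁻¹ c), s * t, H.mul_mem hs ht,
      by simp [Equiv.Perm.mul_apply, htb, hsb], wreathPerm_mul x y s t⟩
  inv_mem' := by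
    rintro a ⟨x, s, hs, hsb, rfl⟩
    refine ⟨fun c => x (s c), s⁻¹, H.inv_mem hs, ?_, wreathPerm_inv x s⟩
    conv_lhs => rw [← hsb]
    exact Equiv.symm_apply_apply s b₀

/-- The subgroup `S_K = (0 × C₂^{B∖{b₀}}) ⋊ Stab_H(b₀)` of `C₂ ≀ H`: the stabilizer of the
point `(1, b₀)`. -/
def wreathSK {B : Type} (H : Subgroup (Equiv.Perm B)) (b₀ : B) :
    Subgroup (Equiv.Perm (ZMod 2 × B)) where
  carrier := {g | ∃ (x : B → ZMod 2) (s : Equiv.Perm B),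
    s ∈ H ∧ s b₀ = b₀ ∧ x b₀ = 0 ∧ g = wreathPerm x s}
  one_mem' := ⟨fun _ => 0, 1, H.one_mem, rfl, rfl, wreathPerm_one.symm⟩
  mul_mem' := by
    rintro a b ⟨x, s, hs, hsb, hxb, rfl⟩ ⟨y, t, ht, htb, hyb, rfl⟩
    refine ⟨fun c => x c + y (s⁻¹ c), s * t, H.mul_mem hs ht,
      by simp [Equiv.Perm.mul_apply, htb, hsb], ?_, wreathPerm_mul x y s t⟩
    have hsb' : s⁻¹ b₀ = b₀ := by
      conv_lhs => rw [← hsb]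
      exact Equiv.symm_apply_apply s b₀
    simp [hsb', hxb, hyb]
  inv_mem' := by
    rintro a ⟨x, s, hs, hsb, hxb, rfl⟩
    refine ⟨fun c => x (s c), s⁻¹, H.inv_mem hs, ?_, ?_, wreathPerm_inv x s⟩
    · conv_lhs => rw [← hsb]
      exact Equiv.symm_apply_apply s b₀
    · show x (s b₀) = 0
      rw [hsb, hxb]
/-- The action of the wreath-product element `x ⋊ s` on `V = F₃^B`, induced from the sign
character: on the standard basis, `(x ⋊ s) · e_b = (−1)^{x_{s(b)}} e_{s(b)}`. -/
def wreathAct {B : Type} [DecidableEq B] (x : B → ZMod 2) (s : Equiv.Perm B)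
    (f : B → ZMod 3) : B → ZMod 3 :=
  fun c => (if x c = 1 then -1 else 1) * f (s⁻¹ c)

lemma wreathSF_apply_base {B : Type} (H : Subgroup (Equiv.Perm B)) (b₀ : B)
    {g : Equiv.Perm (ZMod 2 × B)} (hg : g ∈ wreathSF H b₀) (i : ZMod 2) :
    g (i, b₀) = (i + (g (0, b₀)).1, b₀) := by
  obtain ⟨x, s, hs, hsb, rfl⟩ := hg
  simp [wreathPerm_apply, hsb]

/-- The sign character of `S_F` with kernel `S_K`. -/
def wreathPhi {B : Type} (H : Subgroup (Equiv.Perm B)) (b₀ : B) :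
    (wreathSF H b₀) →* Multiplicative (ZMod 2) where
  toFun g := Multiplicative.ofAdd ((g.1 (0, b₀)).1)
  map_one' := rfl
  map_mul' g h := by
    have hg := wreathSF_apply_base H b₀ g.2
    have hh := wreathSF_apply_base H b₀ h.2
    show Multiplicative.ofAdd (((g.1 * h.1) (0, b₀)).1) = _
    have hmul : (g.1 * h.1) (0, b₀) = g.1 (h.1 (0, b₀)) := rfl
    rw [hmul, hh 0, zero_add, hg ((h.1 (0, b₀)).1)]
    simp only [add_comm]
    rfl

/-- `S_K` has index 2 in `S_F`, and the induction `Ind_{S_F}^G U` of the sign character `U` of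
`S_F/S_K` to `G = C₂ ≀ H` — realized concretely as `F₃^B` with
`(x ⋊ s) · e_b = (−1)^{x_{s(b)}} e_{s(b)}` — is an irreducible `F₃[G]`-representation of
dimension `d = |B|`. -/
theorem sign_induced_representation_irreducible_of_dim_d
    {B : Type} [Fintype B] [DecidableEq B] [Nonempty B]
    (H : Subgroup (Equiv.Perm B)) (b₀ : B)
    (htrans : ∀ a b : B, ∃ s ∈ H, s a = b) :
    wreathSK H b₀ ≤ wreathSF H b₀ ∧
    (wreathSK H b₀).relIndex (wreathSF H b₀) = 2 ∧
    Module.finrank (ZMod 3) (B → ZMod 3) = Fintype.card B ∧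
    ∀ W : Submodule (ZMod 3) (B → ZMod 3),
      (∀ (x : B → ZMod 2) (s : Equiv.Perm B), s ∈ H → ∀ f ∈ W, wreathAct x s f ∈ W) →
      W ≠ ⊥ → W = ⊤ := by
  refine ⟨?_, ?_, Module.finrank_fintype_fun_eq_card _, ?_⟩
  · rintro g ⟨x, s, hs, hsb, hxb, rfl⟩
    exact ⟨x, s, hs, hsb, rfl⟩
  · have hker : (wreathSK H b₀).subgroupOf (wreathSF H b₀) = (wreathPhi H b₀).ker := by
      ext g
      simp only [Subgroup.mem_subgroupOf, MonoidHom.mem_ker]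
      constructor
      · rintro ⟨x, s, hs, hsb, hxb, hgx⟩
        show Multiplicative.ofAdd ((g.1 (0, b₀)).1) = 1
        rw [hgx]
        simp [wreathPerm_apply, hsb, hxb]
      · intro hg
        obtain ⟨x, s, hs, hsb, hgx⟩ := g.2
        refine ⟨x, s, hs, hsb, ?_, hgx⟩
        have h0 : (g.1 (0, b₀)).1 = 0 := hg
        rw [hgx] at h0
        simpa [wreathPerm_apply, hsb] using h0
    have hsurj : Function.Surjective (wreathPhi H b₀) := by
      intro m
      refine ⟨⟨wreathPerm (fun c => if c = b₀ then m.toAdd else 0) 1,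
        fun c => if c = b₀ then m.toAdd else 0, 1, H.one_mem, rfl, rfl⟩, ?_⟩
      show Multiplicative.ofAdd
        ((wreathPerm (fun c => if c = b₀ then m.toAdd else 0) 1 (0, b₀)).1) = m
      simp [wreathPerm_apply]
    rw [Subgroup.relIndex, hker, Subgroup.index_ker,
      MonoidHom.range_eq_top.2 hsurj]
    rw [Nat.card_congr Subgroup.topEquiv.toEquiv]
    simp [Nat.card_eq_fintype_card]
  · intro W hW hbot
    -- find a nonzero element of W
    obtain ⟨f, hfW, hf0⟩ : ∃ f ∈ W, f ≠ 0 := by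
      by_contra h
      push_neg at h
      exact hbot (le_antisymm (fun f hf => h f hf) bot_le)
    obtain ⟨c₀, hc₀⟩ : ∃ c, f c ≠ 0 := by
      by_contra h
      push_neg at h
      exact hf0 (funext h)
    -- the basis vector at c₀ lies in W
    have hsingle : ∀ b : B, (fun j => if b = j then (1 : ZMod 3) else 0) ∈ W := by
      have key : (fun j => if c₀ = j then (1 : ZMod 3) else 0) ∈ W := by
        set x : B → ZMod 2 := fun c => if c = c₀ then 1 else 0 with hx
        have h1 : wreathAct x 1 f ∈ W := hW x 1 H.one_mem f hfW
        have h2 : f - wreathAct x 1 f ∈ W := W.sub_mem hfW h1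
        have heq : f - wreathAct x 1 f
            = (2 * f c₀) • fun j => if c₀ = j then (1 : ZMod 3) else 0 := by
          funext c
          simp only [Pi.sub_apply, Pi.smul_apply, smul_eq_mul, wreathAct, hx, inv_one,
            Equiv.Perm.coe_one, id_eq]
          by_cases hc : c = c₀
          · subst hc
            rw [if_pos (show (if c = c then (1 : ZMod 2) else 0) = 1 from by rw [if_pos rfl]),
              if_pos rfl]
            ring
          · rw [if_neg (show (if c = c₀ then (1 : ZMod 2) else 0) ≠ 1 from by
              rw [if_neg hc]; decide), if_neg (fun h => hc h.symm)]
            ring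
        have hunit : (2 * f c₀) ≠ 0 :=
          mul_ne_zero (by decide) hc₀
        have := W.smul_mem (2 * f c₀)⁻¹ (heq ▸ h2)
        rwa [smul_smul, inv_mul_cancel₀ hunit, one_smul] at this
      intro b
      obtain ⟨s, hs, hsb⟩ := htrans c₀ b
      have h1 := hW (fun _ => 0) s hs _ key
      have heq : wreathAct (fun _ => 0) s (fun j => if c₀ = j then (1 : ZMod 3) else 0)
          = fun j => if b = j then (1 : ZMod 3) else 0 := by
        funext c
        simp only [wreathAct]
        rw [if_neg (show (0 : ZMod 2) ≠ 1 by decide), one_mul]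
        by_cases hc : s⁻¹ c = c₀
        · rw [if_pos hc.symm, if_pos]
          rw [← hsb, ← hc, (show s (s⁻¹ c) = c from Equiv.apply_symm_apply s c)]
        · rw [if_neg (fun h => hc h.symm), if_neg]
          intro h
          apply hc
          rw [← h, ← hsb, (show s⁻¹ (s c₀) = c₀ from Equiv.symm_apply_apply s c₀)]
      rwa [heq] at h1
    -- conclude W = ⊤
    rw [eq_top_iff]
    intro g _
    rw [pi_eq_sum_univ g]
    exact W.sum_mem fun i _ => W.smul_mem _ (hsingle i)
end
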